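/- arXiv:2502.09852 — 3 statements merged into one kernel-verified Lean document; each statement's English description precedes it below -/
import Mathlib

section
/- Let r ≥ 1, let w_1,…,w_r be positive reals, and let a > 0. Then the series ζ_r(s,a,w) = Σ_{m_1,…,m_r ≥ 0} (a + m_1 w_1 + ⋯ + m_r w_r)^{-s} converges absolutely for every complex s with Re(s) > r. -/
/-! The summand at `m` is at most `∏ i (cᵢ (mᵢ + 1))^(-Re s / r)` with `cᵢ = min a wᵢ`, because
`a + ∑ mⱼ wⱼ ≥ cᵢ (mᵢ + 1)` for every `i`. The majorant is a product of one-variable series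
`∑ₖ (k + 1)^(-Re s / r)`, which converge since `Re s / r > 1`. -/

open Finset

theorem summable_fin_prod_of_nonneg {β : Type*} {n : ℕ} {g : Fin n → β → ℝ}
    (hg0 : ∀ i b, 0 ≤ g i b) (hg : ∀ i, Summable (g i)) :
    Summable fun x : Fin n → β => ∏ i, g i (x i) := by
  induction n with
  | zero => exact Summable.of_finite
  | succ n ih =>
    have hprod := (hg 0).mul_of_nonneg (ih (fun i => hg0 i.succ) fun i => hg i.succ) (hg0 0)
      fun x => prod_nonneg fun i _ => hg0 _ _
    refine (hprod.comp_injective (Fin.consEquiv fun _ => β).symm.injective).congr fun x => ?_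
    simp [Fin.prod_univ_succ, Fin.consEquiv, Fin.tail]

theorem summable_mul_nat_add_one_rpow_neg {c p : ℝ} (hc : 0 ≤ c) (hp : 1 < p) :
    Summable fun k : ℕ => (c * (k + 1)) ^ (-p) := by
  have hshift : Summable fun k : ℕ => ((k + 1 : ℕ) : ℝ) ^ (-p) :=
    (summable_nat_add_iff 1).2 (Real.summable_nat_rpow.2 (by linarith))
  refine (hshift.mul_left (c ^ (-p))).congr fun k => ?_
  rw [Real.mul_rpow hc (by positivity)]
  push_cast
  rfl

theorem min_mul_add_one_le {a w m : ℝ} (hm : 0 ≤ m) : min a w * (m + 1) ≤ a + m * w := by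
  nlinarith [min_le_left a w, min_le_right a w]

theorem prod_min_mul_add_one_le_pow {ι : Type*} [Fintype ι] {a : ℝ} (ha : 0 ≤ a) {w : ι → ℝ}
    (hw : ∀ i, 0 ≤ w i) {m : ι → ℝ} (hm : ∀ i, 0 ≤ m i) :
    ∏ i, min a (w i) * (m i + 1) ≤ (a + ∑ i, m i * w i) ^ Fintype.card ι := by
  have hterm : ∀ i, min a (w i) * (m i + 1) ≤ a + ∑ j, m j * w j := fun i =>
    calc min a (w i) * (m i + 1) ≤ a + m i * w i := min_mul_add_one_le (hm i)
      _ ≤ a + ∑ j, m j * w j := by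
        gcongr
        exact single_le_sum (f := fun j => m j * w j)
          (fun j _ => mul_nonneg (hm j) (hw j)) (mem_univ i)
  calc ∏ i, min a (w i) * (m i + 1) ≤ ∏ _i : ι, (a + ∑ j, m j * w j) :=
        prod_le_prod (fun i _ => mul_nonneg (le_min ha (hw i)) (by linarith [hm i]))
          fun i _ => hterm i
    _ = (a + ∑ j, m j * w j) ^ Fintype.card ι := by rw [prod_const, card_univ]

theorem rpow_neg_le_rpow_neg_div_of_le_pow {x y σ : ℝ} {n : ℕ} (hn : 0 < n) (hx : 0 ≤ x)
    (hy : 0 < y) (hyx : y ≤ x ^ n) (hσ : 0 ≤ σ) : x ^ (-σ) ≤ y ^ (-(σ / n)) := by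
  have hpow : x ^ (-σ) = (x ^ n) ^ (-(σ / n)) := by
    rw [← Real.rpow_natCast, ← Real.rpow_mul hx, mul_neg, mul_div_cancel₀ _ (by positivity)]
  rw [hpow]
  exact Real.rpow_le_rpow_of_nonpos hy hyx (neg_nonpos.2 (by positivity))

/-- The Barnes multiple zeta series converges absolutely for `Re s > r`. -/
theorem stmt0 (r : ℕ) (hr : 1 ≤ r) (w : Fin r → ℝ) (hw : ∀ i, 0 < w i)
    (a : ℝ) (ha : 0 < a) (s : ℂ) (hs : (r : ℝ) < s.re) :
    Summable (fun m : Fin r → ℕ =>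
      ‖((a + ∑ i, (m i : ℝ) * w i : ℝ) : ℂ) ^ (-s)‖) := by
  have hp : 1 < s.re / r := (one_lt_div (by positivity)).2 hs
  have hc : ∀ i, 0 < min a (w i) := fun i => lt_min ha (hw i)
  have hfactor : ∀ i (k : ℕ), 0 < min a (w i) * ((k : ℝ) + 1) := fun i _ =>
    mul_pos (hc i) (by positivity)
  have hmajorant : Summable fun m : Fin r → ℕ =>
      ∏ i, (min a (w i) * ((m i : ℝ) + 1)) ^ (-(s.re / r)) :=
    summable_fin_prod_of_nonneg (g := fun i (k : ℕ) => (min a (w i) * (k + 1)) ^ (-(s.re / r)))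
      (fun i k => (Real.rpow_pos_of_pos (hfactor i k) _).le)
      fun i => summable_mul_nat_add_one_rpow_neg (hc i).le hp
  refine Summable.of_nonneg_of_le (fun _ => norm_nonneg _) (fun m => ?_) hmajorant
  have hx : 0 < a + ∑ i, (m i : ℝ) * w i :=
    add_pos_of_pos_of_nonneg ha (sum_nonneg fun i _ => mul_nonneg (m i).cast_nonneg (hw i).le)
  have hbound := prod_min_mul_add_one_le_pow ha.le (fun i => (hw i).le)
    (m := fun i => (m i : ℝ)) fun i => (m i).cast_nonneg
  rw [Fintype.card_fin] at hbound
  rw [Complex.norm_cpow_eq_rpow_re_of_pos hx, Complex.neg_re,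
    Real.finsetProd_rpow _ _ fun i _ => (hfactor i (m i)).le]
  exact rpow_neg_le_rpow_neg_div_of_le_pow hr hx.le (prod_pos fun i _ => hfactor i (m i))
    hbound (by linarith)
end

section
/- Let r ≥ 1, let s be a complex number, let a, w_1, …, w_r > 0, and let 1 ≤ x ≤ N. Then Σ over choices ((p_1,q_1),…,(p_r,q_r)) with each (p_i,q_i) ∈ {(0,x),(x,N)} and not all equal to (0,x), of Σ over b_i ∈ {p_i,q_i} of (−1)^{#{i : b_i = q_i}} (a + b_1 w_1 + ⋯ + b_r w_r)^{r−s}, equals Σ over nonempty subsets E ⊆ {1,…,r} of (−1)^{#E} [ (a + N Σ_{i∈E} w_i)^{r−s} − (a + x Σ_{i∈E} w_i)^{r−s} ]. -/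
/-!
Per coordinate, the box `[0,x]` carries the signed corner masses `+[0] - [x]` and the box `[x,N]`
the masses `+[x] - [N]`; summed over the choice of box the two masses at `x` cancel, leaving the
corner masses `+[0] - [N]` of `[0,N]`. Since the sign of a corner is a product over coordinates,
the sum over all `2^r` sub-boxes is the signed corner sum of `[0,N]^r`, and removing the box
`[0,x]^r` subtracts the signed corner sum of `[0,x]^r`. Grouping corners by the set `E` of
coordinates at the upper end gives the inclusion–exclusion on the right.
-/

open Finset

section ProductWeights

variable {ι κ κ' β R : Type*} [Fintype ι] [DecidableEq ι] [Fintype κ] [Fintype κ']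
  [DecidableEq β] [CommSemiring R]

theorem sum_prod_mul_comp_eq_sum_piFinset (μ : κ → R) (c : κ → β) {S : Finset β}
    (hS : ∀ k, c k ∈ S) (F : (ι → β) → R) :
    ∑ τ : ι → κ, (∏ i, μ (τ i)) * F (fun i => c (τ i)) =
      ∑ v ∈ Fintype.piFinset fun _ : ι => S, (∏ i, ∑ k with c k = v i, μ k) * F v := by
  rw [← sum_fiberwise_of_maps_to (g := fun τ i => c (τ i))
    (t := Fintype.piFinset fun _ : ι => S) (fun τ _ => Fintype.mem_piFinset.2 fun i => hS _)]
  refine sum_congr rfl fun v _ => ?_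
  have hfiber : ({τ | (fun i => c (τ i)) = v} : Finset (ι → κ)) =
      Fintype.piFinset fun i => ({k | c k = v i} : Finset κ) := by
    ext τ
    simp [funext_iff]
  calc ∑ τ : ι → κ with (fun i => c (τ i)) = v, (∏ i, μ (τ i)) * F (fun i => c (τ i))
      = ∑ τ : ι → κ with (fun i => c (τ i)) = v, (∏ i, μ (τ i)) * F v :=
        sum_congr rfl fun τ hτ => by rw [(mem_filter.1 hτ).2]
    _ = (∏ i, ∑ k with c k = v i, μ k) * F v := by
        rw [← sum_mul, hfiber, prod_univ_sum]

theorem sum_prod_mul_comp_congr (μ : κ → R) (c : κ → β) (μ' : κ' → R) (c' : κ' → β)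
    (h : ∀ b, ∑ k with c k = b, μ k = ∑ k with c' k = b, μ' k) (F : (ι → β) → R) :
    ∑ τ : ι → κ, (∏ i, μ (τ i)) * F (fun i => c (τ i)) =
      ∑ τ : ι → κ', (∏ i, μ' (τ i)) * F (fun i => c' (τ i)) := by
  let S := univ.image c ∪ univ.image c'
  rw [sum_prod_mul_comp_eq_sum_piFinset μ c (S := S) (fun k => by simp [S]),
    sum_prod_mul_comp_eq_sum_piFinset μ' c' (S := S) (fun k => by simp [S])]
  simp only [h]

end ProductWeights

theorem neg_one_pow_card_filter {ι R : Type*} [Fintype ι] [CommMonoid R] [HasDistribNeg R]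
    (δ : ι → Bool) : (-1 : R) ^ #{i | δ i} = ∏ i, if δ i then -1 else 1 := by
  rw [prod_ite, prod_const_one, mul_one, prod_const]

theorem sum_sum_signed_corners_split {ι β R : Type*} [Fintype ι] [DecidableEq ι] [DecidableEq β]
    [CommRing R] (u₀ u₁ u₂ : β) (F : (ι → β) → R) :
    ∑ ε : ι → Bool, ∑ δ : ι → Bool, (-1 : R) ^ #{i | δ i} *
        F (fun i => if δ i then (if ε i then u₂ else u₁) else (if ε i then u₁ else u₀)) =
      ∑ δ : ι → Bool, (-1 : R) ^ #{i | δ i} * F (fun i => if δ i then u₂ else u₀) := by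
  rw [← Fintype.sum_prod_type', ← (Equiv.arrowProdEquivProdArrow ι _ _).sum_comp]
  simp only [neg_one_pow_card_filter, Equiv.arrowProdEquivProdArrow_apply]
  refine sum_prod_mul_comp_congr (fun p : Bool × Bool => if p.2 then (-1 : R) else 1)
    (fun p => if p.2 then (if p.1 then u₂ else u₁) else (if p.1 then u₁ else u₀))
    (fun d : Bool => if d then (-1 : R) else 1) (fun d : Bool => if d then u₂ else u₀)
    (fun b => ?_) F
  simp only [sum_filter, Fintype.sum_prod_type, Fintype.sum_bool, if_true, Bool.false_eq_true,
    if_false]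
  split_ifs <;> simp

theorem sum_boolFun_eq_sum_powerset {ι M : Type*} [Fintype ι] [DecidableEq ι] [AddCommMonoid M]
    (G : Finset ι → M) :
    ∑ δ : ι → Bool, G (univ.filter fun i => δ i) = ∑ E ∈ univ.powerset, G E :=
  sum_nbij' (fun δ => univ.filter fun i => δ i) (fun E i => decide (i ∈ E)) (by simp) (by simp)
    (fun δ _ => by ext; simp) (fun E _ => by ext; simp) (fun _ _ => rfl)

theorem stmt7_general (r : ℕ) (s : ℂ) (a : ℝ)
    (w : Fin r → ℝ) (x N : ℝ) :
    ∑ ε ∈ (Finset.univ : Finset (Fin r → Bool)).erase (fun _ => false),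
      ∑ δ : Fin r → Bool,
        (-1 : ℂ) ^ (Finset.univ.filter (fun i => δ i = true)).card *
          ((a + ∑ i, (if δ i then (if ε i then N else x) else (if ε i then x else 0)) * w i
            : ℝ) : ℂ) ^ ((r : ℂ) - s)
    = ∑ E ∈ (Finset.univ : Finset (Fin r)).powerset.filter (· ≠ ∅),
        (-1 : ℂ) ^ E.card *
          (((a + N * ∑ i ∈ E, w i : ℝ) : ℂ) ^ ((r : ℂ) - s)
            - ((a + x * ∑ i ∈ E, w i : ℝ) : ℂ) ^ ((r : ℂ) - s)) := by
  rw [sum_erase_eq_sub (mem_univ _),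
    sum_sum_signed_corners_split 0 x N fun v => ((a + ∑ i, v i * w i : ℝ) : ℂ) ^ ((r : ℂ) - s),
    ← sum_sub_distrib]
  simp only [Bool.false_eq_true, if_false, ite_mul, zero_mul, ← sum_filter, ← mul_sum, ← mul_sub]
  rw [sum_filter_of_ne (p := (· ≠ ∅)), ← sum_boolFun_eq_sum_powerset]
  rintro E - h rfl
  simp at h

/-- Corner telescoping identity (Lemma B): the signed corner sum over all
sub-boxes of `[0,N]^r` split at `x` (except `[0,x]^r`) collapses to an
inclusion–exclusion over nonempty subsets of coordinates. -/
theorem stmt7 (r : ℕ) (hr : 1 ≤ r) (s : ℂ) (a : ℝ) (ha : 0 < a)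
    (w : Fin r → ℝ) (hw : ∀ i, 0 < w i) (x N : ℝ) (hx : 1 ≤ x) (hxN : x ≤ N) :
    ∑ ε ∈ (Finset.univ : Finset (Fin r → Bool)).erase (fun _ => false),
      ∑ δ : Fin r → Bool,
        (-1 : ℂ) ^ (Finset.univ.filter (fun i => δ i = true)).card *
          ((a + ∑ i, (if δ i then (if ε i then N else x) else (if ε i then x else 0)) * w i
            : ℝ) : ℂ) ^ ((r : ℂ) - s)
    = ∑ E ∈ (Finset.univ : Finset (Fin r)).powerset.filter (· ≠ ∅),
        (-1 : ℂ) ^ E.card *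
          (((a + N * ∑ i ∈ E, w i : ℝ) : ℂ) ^ ((r : ℂ) - s)
            - ((a + x * ∑ i ∈ E, w i : ℝ) : ℂ) ^ ((r : ℂ) - s)) :=
  stmt7_general r s a w x N
end

section
/- Let r ≥ 1, a > 0, w_1,…,w_r > 0, and r−1 ≤ σ ≤ r. Then as T → ∞, the sum over pairs of tuples m, n ∈ ℤ_{≥0}^r with all coordinates ≤ T and m·w = n·w of max_{1≤k≤r}{m_k, n_k}/((a+m·w)^σ (a+n·w)^σ) is O(T^{2r−2σ}) if σ < r and O(log T) if σ = r. -/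
/-!
Write `|m| = m₁ + ⋯ + mᵣ`. On the hyperplane `m·w = n·w` the four quantities `a + m·w`, `a + n·w`,
`1 + |m|` and `1 + |n|` are comparable, and `M ≤ |m| + |n|`, so each term is `≪ (1 + |m|)^(1 - 2σ)`.
For fixed `m`, a point `n` of the hyperplane has coordinates `≪ 1 + |m|` and is determined by all
but one of them, so there are `≪ (1 + |m|)^(r - 1)` such `n`. Grouping the `m ∈ [0, N]^r` by
`s = |m|` (at most `(s + 1)^(r - 1)` of them) bounds the whole sum by
`≪ ∑_{s ≤ rN} (1 + s)^(2r - 2σ - 1)`, which is `≪ N^(2r - 2σ)` for `σ < r`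
and `≪ log N` for `σ = r`.
-/

open Filter Finset

lemma sum_range_rpow_le {β : ℝ} (hβ : -1 < β) (n : ℕ) :
    ∑ s ∈ range (n + 1), (1 + (s : ℝ)) ^ β ≤ (1 + 1 / (β + 1)) * (1 + (n : ℝ)) ^ (β + 1) := by
  have hβ₁ : 0 < β + 1 := by linarith
  rcases le_or_gt 0 β with hβ₀ | hβ₀
  · calc ∑ s ∈ range (n + 1), (1 + (s : ℝ)) ^ β ≤ ∑ _s ∈ range (n + 1), (1 + (n : ℝ)) ^ β := by
          gcongr with s hs
          exact_mod_cast Nat.lt_succ_iff.mp (mem_range.mp hs)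
      _ = (1 + (n : ℝ)) ^ (β + 1) := by
          rw [sum_const, card_range, nsmul_eq_mul, Real.rpow_add_one (by positivity)]
          push_cast; ring
      _ ≤ _ := le_mul_of_one_le_left (by positivity) (by simp; positivity)
  · -- `0 ^ β = 0` for `β < 0`, so `x ^ β` is antitone only away from `0`: split off `s = 0`.
    have hanti : AntitoneOn (fun x : ℝ => x ^ β) (Set.Icc 1 (1 + n)) :=
      (Real.antitoneOn_rpow_Ioi_of_exponent_nonpos hβ₀.le).mono
        fun x hx => lt_of_lt_of_le one_pos hx.1
    have hint := hanti.sum_le_integral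
    rw [integral_rpow (Or.inl hβ), Real.one_rpow] at hint
    rw [sum_range_succ', Nat.cast_zero, add_zero, Real.one_rpow]
    calc ∑ s ∈ range n, (1 + ((s + 1 : ℕ) : ℝ)) ^ β + 1
        ≤ ((1 + (n : ℝ)) ^ (β + 1) - 1) / (β + 1) + 1 := by gcongr
      _ ≤ _ := by
          rw [add_mul, one_mul, div_mul_eq_mul_div, one_mul]
          have := div_le_div_of_nonneg_right
            (sub_le_self ((1 + n : ℝ) ^ (β + 1)) zero_le_one) hβ₁.le
          linarith [Real.one_le_rpow (by simp : (1 : ℝ) ≤ 1 + n) hβ₁.le]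

lemma sum_range_rpow_neg_one_le (n : ℕ) :
    ∑ s ∈ range (n + 1), (1 + (s : ℝ)) ^ (-1 : ℝ) ≤ 1 + Real.log (1 + n) := by
  have h := harmonic_le_one_add_log (n + 1)
  simp only [harmonic, Rat.cast_sum, Rat.cast_inv, Rat.cast_natCast] at h
  push_cast at h
  simpa [Real.rpow_neg_one, add_comm] using h

lemma one_add_natCast_mul_floor_le (k : ℕ) {T : ℝ} (hT : 1 ≤ T) :
    1 + ((k * ⌊T⌋₊ : ℕ) : ℝ) ≤ (k + 1) * T := by
  have := Nat.floor_le (zero_le_one.trans hT)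
  push_cast
  nlinarith [(Nat.cast_nonneg k : (0 : ℝ) ≤ k)]

section

variable {ι : Type*} [Fintype ι]

def weightedSum (w : ι → ℝ) (m : ι → ℕ) : ℝ := ∑ i, (m i : ℝ) * w i

lemma weightedSum_nonneg {w : ι → ℝ} (hw : ∀ i, 0 ≤ w i) (m : ι → ℕ) :
    0 ≤ weightedSum w m :=
  sum_nonneg fun i _ => mul_nonneg (Nat.cast_nonneg _) (hw i)

lemma exists_comparable_add_weightedSum [Nonempty ι] {a : ℝ} (ha : 0 < a) {w : ι → ℝ}
    (hw : ∀ i, 0 < w i) :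
    ∃ c C : ℝ, 0 < c ∧ ∀ m : ι → ℕ, c * (1 + ∑ i, (m i : ℝ)) ≤ a + weightedSum w m ∧
      a + weightedSum w m ≤ C * (1 + ∑ i, (m i : ℝ)) := by
  obtain ⟨i₀, hi₀⟩ := Finite.exists_min w
  obtain ⟨i₁, hi₁⟩ := Finite.exists_max w
  refine ⟨min a (w i₀), max a (w i₁), lt_min ha (hw i₀), fun m => ⟨?_, ?_⟩⟩
  · have : min a (w i₀) * ∑ i, (m i : ℝ) ≤ weightedSum w m := by
      rw [mul_sum]
      exact sum_le_sum fun i _ => by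
        rw [mul_comm]; gcongr; exact (min_le_right _ _).trans (hi₀ i)
    nlinarith [min_le_left a (w i₀)]
  · have : weightedSum w m ≤ max a (w i₁) * ∑ i, (m i : ℝ) := by
      rw [mul_sum]
      exact sum_le_sum fun i _ => by
        rw [mul_comm]; gcongr; exact (hi₁ i).trans (le_max_right _ _)
    nlinarith [le_max_left a (w i₁)]

lemma card_le_pow_of_forall_weightedSum_eq [DecidableEq ι] {w : ι → ℝ} {i₀ : ι}
    (hw : w i₀ ≠ 0) {F : Finset (ι → ℕ)} {K : ℕ} {t : ℝ} (hK : ∀ n ∈ F, ∀ i, n i ≤ K)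
    (ht : ∀ n ∈ F, weightedSum w n = t) :
    #F ≤ (K + 1) ^ (Fintype.card ι - 1) := by
  have hinj : Set.InjOn (fun (n : ι → ℕ) (i : {i // i ≠ i₀}) => n i) F := by
    intro n hn n' hn' h
    have hoff : ∀ i ≠ i₀, n i = n' i := fun i hi => congrFun h ⟨i, hi⟩
    have hdiff : weightedSum w n - weightedSum w n' = ((n i₀ : ℝ) - n' i₀) * w i₀ := by
      rw [weightedSum, weightedSum, ← sum_sub_distrib,
        sum_eq_single i₀ (fun i _ hi => by rw [hoff i hi, sub_self]) (by simp)]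
      ring
    rw [ht n hn, ht n' hn', sub_self, eq_comm, mul_eq_zero, sub_eq_zero, Nat.cast_inj] at hdiff
    funext i
    by_cases hi : i = i₀
    · exact hi ▸ hdiff.resolve_right hw
    · exact hoff i hi
  calc #F ≤ #(Fintype.piFinset fun _ : {i // i ≠ i₀} => Iic K) :=
        card_le_card_of_injOn _
          (fun n hn => Fintype.mem_piFinset.2 fun i => mem_Iic.2 (hK n hn i)) hinj
    _ = (K + 1) ^ (Fintype.card ι - 1) := by simp

lemma rpow_card_sub_one [Nonempty ι] (x : ℝ) :
    x ^ (Fintype.card ι - 1) = x ^ ((Fintype.card ι : ℝ) - 1) := by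
  rw [← Real.rpow_natCast, Nat.cast_pred Fintype.card_pos]

lemma one_add_sum_le_of_weightedSum_eq {a c C : ℝ} {w : ι → ℝ} (hc : 0 < c)
    (hlow : ∀ m : ι → ℕ, c * (1 + ∑ i, (m i : ℝ)) ≤ a + weightedSum w m)
    (hup : ∀ m : ι → ℕ, a + weightedSum w m ≤ C * (1 + ∑ i, (m i : ℝ)))
    {m n : ι → ℕ} (h : weightedSum w m = weightedSum w n) :
    1 + ∑ i, (n i : ℝ) ≤ C / c * (1 + ∑ i, (m i : ℝ)) := by
  rw [div_mul_eq_mul_div, le_div_iff₀ hc]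
  linarith [hlow n, hup m]

def maxCoord (m n : ι → ℕ) : ℕ := univ.sup fun k => max (m k) (n k)

lemma maxCoord_le_sum_add_sum (m n : ι → ℕ) :
    (maxCoord m n : ℝ) ≤ ∑ i, (m i : ℝ) + ∑ i, (n i : ℝ) := by
  have : maxCoord m n ≤ ∑ i, m i + ∑ i, n i :=
    Finset.sup_le fun k hk => max_le
      ((single_le_sum (fun i _ => Nat.zero_le (m i)) hk).trans (Nat.le_add_right _ _))
      ((single_le_sum (fun i _ => Nat.zero_le (n i)) hk).trans (Nat.le_add_left _ _))
  exact_mod_cast this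

lemma maxCoord_div_le {a c C σ : ℝ} {w : ι → ℝ} (hc : 0 < c) (hσ : 0 ≤ σ)
    (hlow : ∀ m : ι → ℕ, c * (1 + ∑ i, (m i : ℝ)) ≤ a + weightedSum w m)
    (hup : ∀ m : ι → ℕ, a + weightedSum w m ≤ C * (1 + ∑ i, (m i : ℝ)))
    {m n : ι → ℕ} (h : weightedSum w m = weightedSum w n) :
    (maxCoord m n : ℝ) / ((a + weightedSum w m) ^ σ * (a + weightedSum w n) ^ σ) ≤
      (1 + C / c) / c ^ (2 * σ) * (1 + ∑ i, (m i : ℝ)) ^ (1 - 2 * σ) := by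
  set x := 1 + ∑ i, (m i : ℝ)
  have hx : 0 < x := by positivity
  have hnum : (maxCoord m n : ℝ) ≤ (1 + C / c) * x := by
    linarith [maxCoord_le_sum_add_sum m n, one_add_sum_le_of_weightedSum_eq hc hlow hup h]
  have hden : c ^ (2 * σ) * x ^ (2 * σ) ≤
      (a + weightedSum w m) ^ σ * (a + weightedSum w n) ^ σ := by
    have hpos : 0 < a + weightedSum w m := (mul_pos hc hx).trans_le (hlow m)
    rw [← h, ← Real.rpow_add hpos, ← two_mul, ← Real.mul_rpow hc.le hx.le]
    exact Real.rpow_le_rpow (by positivity) (hlow m) (by positivity)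
  calc (maxCoord m n : ℝ) / ((a + weightedSum w m) ^ σ * (a + weightedSum w n) ^ σ)
      ≤ (1 + C / c) * x / (c ^ (2 * σ) * x ^ (2 * σ)) :=
        div_le_div₀ ((Nat.cast_nonneg _).trans hnum) hnum (by positivity) hden
    _ = (1 + C / c) / c ^ (2 * σ) * x ^ (1 - 2 * σ) := by
        rw [Real.rpow_sub hx, Real.rpow_one, mul_div_mul_comm]

lemma card_filter_weightedSum_eq_le [DecidableEq ι] [Nonempty ι] {a c C : ℝ} {w : ι → ℝ}
    (hw : ∀ i, 0 < w i) (hc : 0 < c)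
    (hlow : ∀ m : ι → ℕ, c * (1 + ∑ i, (m i : ℝ)) ≤ a + weightedSum w m)
    (hup : ∀ m : ι → ℕ, a + weightedSum w m ≤ C * (1 + ∑ i, (m i : ℝ))) (N : ℕ) (m : ι → ℕ) :
    (#{n ∈ Fintype.piFinset fun _ : ι => Iic N | weightedSum w m = weightedSum w n} : ℝ) ≤
      ((1 + C / c) * (1 + ∑ i, (m i : ℝ))) ^ ((Fintype.card ι : ℝ) - 1) := by
  set x := 1 + ∑ i, (m i : ℝ)
  have hx : 1 ≤ x := le_add_of_nonneg_right (by positivity)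
  have hy : 1 ≤ C / c * x := hx.trans (one_add_sum_le_of_weightedSum_eq hc hlow hup rfl)
  have hcard := card_le_pow_of_forall_weightedSum_eq (hw (Classical.arbitrary ι)).ne'
    (K := ⌊C / c * x⌋₊) (t := weightedSum w m)
    (F := {n ∈ Fintype.piFinset fun _ : ι => Iic N | weightedSum w m = weightedSum w n})
    (fun n hn i => Nat.le_floor <|
      (single_le_sum (f := fun i => (n i : ℝ)) (fun i _ => Nat.cast_nonneg _) (mem_univ i)).trans
        ((le_add_of_nonneg_left zero_le_one).trans
          (one_add_sum_le_of_weightedSum_eq hc hlow hup (mem_filter.1 hn).2)))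
    (fun n hn => (mem_filter.1 hn).2.symm)
  calc (#{n ∈ Fintype.piFinset fun _ : ι => Iic N | weightedSum w m = weightedSum w n} : ℝ)
      ≤ ((⌊C / c * x⌋₊ : ℝ) + 1) ^ (Fintype.card ι - 1) := by exact_mod_cast hcard
    _ ≤ ((1 + C / c) * x) ^ (Fintype.card ι - 1) := by
        gcongr
        nlinarith [Nat.floor_le (zero_le_one.trans hy)]
    _ = _ := rpow_card_sub_one _

lemma sum_piFinset_rpow_le [DecidableEq ι] [Nonempty ι] (γ : ℝ) (N : ℕ) :
    ∑ m ∈ Fintype.piFinset (fun _ : ι => Iic N), (1 + ∑ i, (m i : ℝ)) ^ γ ≤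
      ∑ s ∈ range (Fintype.card ι * N + 1), (1 + (s : ℝ)) ^ (γ + (Fintype.card ι - 1)) := by
  have hmaps : ∀ m ∈ Fintype.piFinset (fun _ : ι => Iic N),
      ∑ i, m i ∈ range (Fintype.card ι * N + 1) := fun m hm => by
    rw [mem_range, Nat.lt_succ_iff, ← card_univ, ← smul_eq_mul]
    exact sum_le_card_nsmul _ _ _ fun i _ => mem_Iic.1 (Fintype.mem_piFinset.1 hm i)
  rw [← sum_fiberwise_of_maps_to hmaps]
  gcongr with s
  set F := {m ∈ Fintype.piFinset (fun _ : ι => Iic N) | ∑ i, m i = s}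
  have hcard : #F ≤ (s + 1) ^ (Fintype.card ι - 1) :=
    card_le_pow_of_forall_weightedSum_eq (w := fun _ => 1) (i₀ := Classical.arbitrary ι)
      one_ne_zero (t := s)
      (fun n hn i => (mem_filter.1 hn).2 ▸ single_le_sum (fun i _ => Nat.zero_le _) (mem_univ i))
      (fun n hn => by simp [weightedSum, ← (mem_filter.1 hn).2])
  calc ∑ m ∈ F, (1 + ∑ i, (m i : ℝ)) ^ γ = #F * (1 + (s : ℝ)) ^ γ := by
        rw [← nsmul_eq_mul, ← sum_const]
        exact sum_congr rfl fun m hm => by rw [← (mem_filter.1 hm).2]; push_cast; rfl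
    _ ≤ (1 + (s : ℝ)) ^ (Fintype.card ι - 1) * (1 + (s : ℝ)) ^ γ := by
        gcongr
        rw [add_comm]
        exact_mod_cast hcard
    _ = (1 + (s : ℝ)) ^ (γ + (Fintype.card ι - 1)) := by
        rw [rpow_card_sub_one, ← Real.rpow_add (by positivity), add_comm γ]

noncomputable def diagSum [DecidableEq ι] (a σ : ℝ) (w : ι → ℝ) (N : ℕ) : ℝ :=
  ∑ p ∈ (Fintype.piFinset (fun _ : ι => Iic N) ×ˢ Fintype.piFinset fun _ : ι => Iic N).filter
      (fun p => weightedSum w p.1 = weightedSum w p.2),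
    (maxCoord p.1 p.2 : ℝ) / ((a + weightedSum w p.1) ^ σ * (a + weightedSum w p.2) ^ σ)

lemma diagSum_nonneg [DecidableEq ι] {a : ℝ} (ha : 0 ≤ a) (σ : ℝ) {w : ι → ℝ}
    (hw : ∀ i, 0 ≤ w i) (N : ℕ) : 0 ≤ diagSum a σ w N :=
  sum_nonneg fun _ _ => div_nonneg (Nat.cast_nonneg _) <| mul_nonneg
    (Real.rpow_nonneg (add_nonneg ha (weightedSum_nonneg hw _)) _)
    (Real.rpow_nonneg (add_nonneg ha (weightedSum_nonneg hw _)) _)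

theorem diagSum_le [DecidableEq ι] [Nonempty ι] {a σ : ℝ} {w : ι → ℝ} (ha : 0 < a)
    (hw : ∀ i, 0 < w i) (hσ : 0 ≤ σ) :
    ∃ K : ℝ, 0 ≤ K ∧ ∀ N : ℕ, diagSum a σ w N ≤
      K * ∑ s ∈ range (Fintype.card ι * N + 1),
        (1 + (s : ℝ)) ^ (2 * Fintype.card ι - 2 * σ - 1) := by
  obtain ⟨c, C, hc, hcomp⟩ := exists_comparable_add_weightedSum ha hw
  have hlow := fun m => (hcomp m).1
  have hup := fun m => (hcomp m).2
  set B := 1 + C / c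
  have hB : 0 ≤ B := by
    have := one_add_sum_le_of_weightedSum_eq hc hlow hup (rfl : weightedSum w 0 = _)
    simp only [Pi.zero_apply, Nat.cast_zero, sum_const_zero, add_zero, mul_one] at this
    linarith
  refine ⟨B ^ ((Fintype.card ι : ℝ) - 1) * (B / c ^ (2 * σ)), by positivity, fun N => ?_⟩
  set box := Fintype.piFinset fun _ : ι => Iic N
  calc diagSum a σ w N
      ≤ ∑ p ∈ (box ×ˢ box).filter (fun p => weightedSum w p.1 = weightedSum w p.2),
          B / c ^ (2 * σ) * (1 + ∑ i, (p.1 i : ℝ)) ^ (1 - 2 * σ) :=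
        sum_le_sum fun p hp => maxCoord_div_le hc hσ hlow hup (mem_filter.1 hp).2
    _ = ∑ m ∈ box, #{n ∈ box | weightedSum w m = weightedSum w n} *
          (B / c ^ (2 * σ) * (1 + ∑ i, (m i : ℝ)) ^ (1 - 2 * σ)) := by
        rw [sum_filter, sum_product]
        refine sum_congr rfl fun m _ => ?_
        rw [← sum_filter]
        dsimp only
        rw [sum_const, nsmul_eq_mul]
    _ ≤ ∑ m ∈ box, ((B * (1 + ∑ i, (m i : ℝ))) ^ ((Fintype.card ι : ℝ) - 1) *
          (B / c ^ (2 * σ) * (1 + ∑ i, (m i : ℝ)) ^ (1 - 2 * σ))) :=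
        sum_le_sum fun m _ => mul_le_mul_of_nonneg_right
          (card_filter_weightedSum_eq_le hw hc hlow hup N m) (by positivity)
    _ = B ^ ((Fintype.card ι : ℝ) - 1) * (B / c ^ (2 * σ)) *
          ∑ m ∈ box, (1 + ∑ i, (m i : ℝ)) ^ (Fintype.card ι - 2 * σ) := by
        rw [mul_sum]
        refine sum_congr rfl fun m _ => ?_
        have hx : 0 < 1 + ∑ i, (m i : ℝ) := by positivity
        rw [Real.mul_rpow hB hx.le, show (Fintype.card ι : ℝ) - 2 * σ =
          (Fintype.card ι - 1) + (1 - 2 * σ) by ring, Real.rpow_add hx]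
        ring
    _ ≤ _ := by
        rw [show (2 * Fintype.card ι - 2 * σ - 1 : ℝ) =
          (Fintype.card ι - 2 * σ) + (Fintype.card ι - 1) by ring]
        gcongr
        exact sum_piFinset_rpow_le _ N

theorem isBigO_diagSum_rpow [DecidableEq ι] [Nonempty ι] {a σ : ℝ} {w : ι → ℝ} (ha : 0 < a)
    (hw : ∀ i, 0 < w i) (hσ₀ : 0 ≤ σ) (hσ : σ < Fintype.card ι) :
    (fun T : ℝ => diagSum a σ w ⌊T⌋₊) =O[atTop]
      fun T => T ^ (2 * (Fintype.card ι : ℝ) - 2 * σ) := by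
  obtain ⟨K, hK, hS⟩ := diagSum_le ha hw hσ₀
  set β := 2 * (Fintype.card ι : ℝ) - 2 * σ - 1
  have hβ : -1 < β := by linarith
  refine Asymptotics.IsBigO.of_bound (K * (1 + 1 / (β + 1)) * (Fintype.card ι + 1) ^ (β + 1)) ?_
  filter_upwards [eventually_ge_atTop 1] with T hT
  have hT₀ : 0 ≤ T := zero_le_one.trans hT
  rw [Real.norm_of_nonneg (diagSum_nonneg ha.le σ (fun i => (hw i).le) _),
    Real.norm_of_nonneg (Real.rpow_nonneg hT₀ _),
    show 2 * (Fintype.card ι : ℝ) - 2 * σ = β + 1 by ring]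
  calc diagSum a σ w ⌊T⌋₊
      ≤ K * ∑ s ∈ range (Fintype.card ι * ⌊T⌋₊ + 1), (1 + (s : ℝ)) ^ β := hS _
    _ ≤ K * ((1 + 1 / (β + 1)) * (1 + ((Fintype.card ι * ⌊T⌋₊ : ℕ) : ℝ)) ^ (β + 1)) := by
        gcongr
        exact sum_range_rpow_le hβ _
    _ ≤ K * ((1 + 1 / (β + 1)) * ((Fintype.card ι + 1) * T) ^ (β + 1)) := by
        have : 0 < β + 1 := by linarith
        gcongr
        exact one_add_natCast_mul_floor_le _ hT
    _ = _ := by rw [Real.mul_rpow (by positivity) hT₀]; ring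

theorem isBigO_diagSum_log [DecidableEq ι] [Nonempty ι] {a : ℝ} {w : ι → ℝ} (ha : 0 < a)
    (hw : ∀ i, 0 < w i) :
    (fun T : ℝ => diagSum a (Fintype.card ι) w ⌊T⌋₊) =O[atTop] Real.log := by
  obtain ⟨K, hK, hS⟩ := diagSum_le ha hw (Nat.cast_nonneg (Fintype.card ι))
  refine Asymptotics.IsBigO.of_bound (3 * K) ?_
  filter_upwards [eventually_ge_atTop (Real.exp 1), eventually_ge_atTop ((Fintype.card ι : ℝ) + 1)]
    with T hTe hTr
  have hT : 1 ≤ T := (Real.one_le_exp zero_le_one).trans hTe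
  have hlog₁ : 1 ≤ Real.log T := by rwa [Real.le_log_iff_exp_le (by positivity)]
  have hlogr : Real.log (Fintype.card ι + 1) ≤ Real.log T := Real.log_le_log (by positivity) hTr
  rw [Real.norm_of_nonneg (diagSum_nonneg ha.le _ (fun i => (hw i).le) _),
    Real.norm_of_nonneg (by linarith)]
  calc diagSum a (Fintype.card ι) w ⌊T⌋₊
      ≤ K * ∑ s ∈ range (Fintype.card ι * ⌊T⌋₊ + 1), (1 + (s : ℝ)) ^ (-1 : ℝ) := by
        convert hS ⌊T⌋₊ using 4; ring
    _ ≤ K * (1 + Real.log (1 + ((Fintype.card ι * ⌊T⌋₊ : ℕ) : ℝ))) := by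
        gcongr
        exact sum_range_rpow_neg_one_le _
    _ ≤ K * (1 + Real.log ((Fintype.card ι + 1) * T)) := by
        gcongr
        exact one_add_natCast_mul_floor_le _ hT
    _ = K * (1 + Real.log (Fintype.card ι + 1) + Real.log T) := by
        rw [Real.log_mul (by positivity) (by positivity)]; ring
    _ ≤ 3 * K * Real.log T := by nlinarith

end

theorem stmt14_general (r : ℕ) (hr : 1 ≤ r) (a : ℝ) (ha : 0 < a) (w : Fin r → ℝ)
    (hw : ∀ i, 0 < w i) (σ : ℝ) (hσ₁ : (r : ℝ) - 1 ≤ σ) :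
    (σ < (r : ℝ) →
      (fun T : ℝ =>
        ∑ p ∈ ((Fintype.piFinset (fun _ : Fin r => Finset.Iic ⌊T⌋₊)) ×ˢ
              (Fintype.piFinset (fun _ : Fin r => Finset.Iic ⌊T⌋₊))).filter
            (fun p => ∑ i, (p.1 i : ℝ) * w i = ∑ i, (p.2 i : ℝ) * w i),
          ((Finset.univ.sup (fun k => max (p.1 k) (p.2 k)) : ℕ) : ℝ) /
            ((a + ∑ i, (p.1 i : ℝ) * w i) ^ σ * (a + ∑ i, (p.2 i : ℝ) * w i) ^ σ))
        =O[atTop] fun T : ℝ => T ^ (2 * (r : ℝ) - 2 * σ)) ∧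
    (σ = (r : ℝ) →
      (fun T : ℝ =>
        ∑ p ∈ ((Fintype.piFinset (fun _ : Fin r => Finset.Iic ⌊T⌋₊)) ×ˢ
              (Fintype.piFinset (fun _ : Fin r => Finset.Iic ⌊T⌋₊))).filter
            (fun p => ∑ i, (p.1 i : ℝ) * w i = ∑ i, (p.2 i : ℝ) * w i),
          ((Finset.univ.sup (fun k => max (p.1 k) (p.2 k)) : ℕ) : ℝ) /
            ((a + ∑ i, (p.1 i : ℝ) * w i) ^ σ * (a + ∑ i, (p.2 i : ℝ) * w i) ^ σ))
        =O[atTop] fun T : ℝ => Real.log T) := by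
  have : Nonempty (Fin r) := ⟨⟨0, hr⟩⟩
  have hσ₀ : 0 ≤ σ := by
    have : (1 : ℝ) ≤ r := by exact_mod_cast hr
    linarith
  refine ⟨fun hσ => ?_, fun hσ => ?_⟩
  · have h := isBigO_diagSum_rpow ha hw hσ₀ (by rwa [Fintype.card_fin])
    rw [Fintype.card_fin] at h
    exact h
  · subst hσ
    have h := isBigO_diagSum_log ha hw
    rw [Fintype.card_fin] at h
    exact h

/-- Estimate of the diagonal sum weighted by the maximum coordinate `M`
(from the proof of Theorem 3). -/
theorem stmt14 (r : ℕ) (hr : 1 ≤ r) (a : ℝ) (ha : 0 < a) (w : Fin r → ℝ)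
    (hw : ∀ i, 0 < w i) (σ : ℝ) (hσ₁ : (r : ℝ) - 1 ≤ σ) (hσ₂ : σ ≤ (r : ℝ)) :
    (σ < (r : ℝ) →
      (fun T : ℝ =>
        ∑ p ∈ ((Fintype.piFinset (fun _ : Fin r => Finset.Iic ⌊T⌋₊)) ×ˢ
              (Fintype.piFinset (fun _ : Fin r => Finset.Iic ⌊T⌋₊))).filter
            (fun p => ∑ i, (p.1 i : ℝ) * w i = ∑ i, (p.2 i : ℝ) * w i),
          ((Finset.univ.sup (fun k => max (p.1 k) (p.2 k)) : ℕ) : ℝ) /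
            ((a + ∑ i, (p.1 i : ℝ) * w i) ^ σ * (a + ∑ i, (p.2 i : ℝ) * w i) ^ σ))
        =O[atTop] fun T : ℝ => T ^ (2 * (r : ℝ) - 2 * σ)) ∧
    (σ = (r : ℝ) →
      (fun T : ℝ =>
        ∑ p ∈ ((Fintype.piFinset (fun _ : Fin r => Finset.Iic ⌊T⌋₊)) ×ˢ
              (Fintype.piFinset (fun _ : Fin r => Finset.Iic ⌊T⌋₊))).filter
            (fun p => ∑ i, (p.1 i : ℝ) * w i = ∑ i, (p.2 i : ℝ) * w i),
          ((Finset.univ.sup (fun k => max (p.1 k) (p.2 k)) : ℕ) : ℝ) /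
            ((a + ∑ i, (p.1 i : ℝ) * w i) ^ σ * (a + ∑ i, (p.2 i : ℝ) * w i) ^ σ))
        =O[atTop] fun T : ℝ => Real.log T) :=
  stmt14_general r hr a ha w hw σ hσ₁
end
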